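/- Let R > 0. There exists a constant C > 0 (depending only on R) such that for all smooth (C^∞) vector fields u, v, w : ℝ³ → ℝ³ supported in the closed ball of radius R centered at the origin, |b*(u,v,w)| ≤ C · ‖u‖_{L²} · (‖Dv‖_{L³} + ‖v‖_{L^∞}) · ‖Dw‖_{L²}, where ‖u‖_{L²} = (∫|u(x)|² dx)^{1/2}, ‖Dv‖_{L³} = (∫‖Dv(x)‖³ dx)^{1/3}, ‖v‖_{L^∞} = sup_x |v(x)|, and ‖Dw‖_{L²} = (∫‖Dw(x)‖² dx)^{1/2}, with |·| the Euclidean norm on ℝ³ and ‖·‖ the Frobenius norm of a matrix. -/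

import Mathlib

open MeasureTheory
open scoped ENNReal NNReal

/-- The Frobenius norm of a (continuous) linear map on `ℝ³`, i.e. the Euclidean norm of
its matrix of entries in the standard basis. -/
noncomputable def frobNorm
    (f : EuclideanSpace ℝ (Fin 3) →L[ℝ] EuclideanSpace ℝ (Fin 3)) : ℝ :=
  Real.sqrt (∑ i, ∑ j, (f (EuclideanSpace.single j 1) i) ^ 2)

/-- The skew-symmetric trilinear form
`b*(u,v,w) = (1/2)∫ (u·∇)v · w − (1/2)∫ (u·∇)w · v` on `ℝ³`. -/
noncomputable def bstar
    (u v w : EuclideanSpace ℝ (Fin 3) → EuclideanSpace ℝ (Fin 3)) : ℝ :=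
  (1 / 2) * (∫ x, (inner ℝ (fderiv ℝ v x (u x)) (w x) : ℝ)) -
    (1 / 2) * (∫ x, (inner ℝ (fderiv ℝ w x (u x)) (v x) : ℝ))

namespace BstarAux

notation "E3" => EuclideanSpace ℝ (Fin 3)

lemma hcs_sq {f : EuclideanSpace ℝ (Fin 3) → ℝ} (h : HasCompactSupport f) :
    HasCompactSupport fun x => f x ^ 2 :=
  h.comp_left (g := fun t : ℝ => t ^ 2) (by norm_num)

lemma frobNorm_nonneg (f : E3 →L[ℝ] E3) : 0 ≤ frobNorm f := Real.sqrt_nonneg _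

lemma sum_coord (c : Fin 3 → E3) (i : Fin 3) :
    (∑ x : Fin 3, c x) i = ∑ x : Fin 3, c x i := rfl

lemma opNorm_le_frobNorm (f : E3 →L[ℝ] E3) :
    ‖f‖ ≤ frobNorm f := by
  refine ContinuousLinearMap.opNorm_le_bound _ (frobNorm_nonneg f) fun y => ?_
  have hy : f y = ∑ j, y j • f (EuclideanSpace.single j (1:ℝ)) := by
    have : y = ∑ j, y j • EuclideanSpace.single j (1:ℝ) := by
      ext i
      rw [sum_coord]
      simp [EuclideanSpace.single_apply]
    conv_lhs => rw [this]
    simp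
  have key : ‖f y‖ ^ 2 ≤ (∑ i, ∑ j, (f (EuclideanSpace.single j 1) i) ^ 2) * ‖y‖ ^ 2 := by
    have h1 : ‖f y‖ ^ 2 = ∑ i, (f y i) ^ 2 := by
      rw [EuclideanSpace.norm_eq, Real.sq_sqrt (by positivity)]
      simp [sq_abs]
    have h2 : ‖y‖ ^ 2 = ∑ j, (y j) ^ 2 := by
      rw [EuclideanSpace.norm_eq, Real.sq_sqrt (by positivity)]
      simp [sq_abs]
    rw [h1, h2, Finset.sum_mul]
    refine Finset.sum_le_sum fun i _ => ?_
    have h3 : f y i = ∑ j, f (EuclideanSpace.single j 1) i * y j := by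
      rw [hy, sum_coord]
      simp [mul_comm]
    rw [h3]
    exact Finset.sum_mul_sq_le_sq_mul_sq _ _ _
  calc ‖f y‖ = Real.sqrt (‖f y‖ ^ 2) := (Real.sqrt_sq (norm_nonneg _)).symm
    _ ≤ Real.sqrt ((∑ i, ∑ j, (f (EuclideanSpace.single j 1) i) ^ 2) * ‖y‖ ^ 2) :=
        Real.sqrt_le_sqrt key
    _ = frobNorm f * ‖y‖ := by
        rw [Real.sqrt_mul (by positivity), Real.sqrt_sq (norm_nonneg _)]; rfl

lemma frobNorm_continuous {g : E3 → (E3 →L[ℝ] E3)} (hg : Continuous g) :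
    Continuous fun x => frobNorm (g x) := by
  unfold frobNorm
  refine Real.continuous_sqrt.comp ?_
  refine continuous_finset_sum _ fun i _ => continuous_finset_sum _ fun j _ => ?_
  exact ((EuclideanSpace.proj i).continuous.comp (hg.clm_apply continuous_const)).pow 2

lemma rpow_two_eq (x : ℝ) : x ^ (2:ℝ) = x ^ 2 := by
  rw [show (2:ℝ) = ((2:ℕ):ℝ) by norm_num, Real.rpow_natCast]

lemma rpow_three_eq (x : ℝ) : x ^ (3:ℝ) = x ^ 3 := by
  rw [show (3:ℝ) = ((3:ℕ):ℝ) by norm_num, Real.rpow_natCast]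

lemma rpow_six_eq (x : ℝ) : x ^ (6:ℝ) = x ^ 6 := by
  rw [show (6:ℝ) = ((6:ℕ):ℝ) by norm_num, Real.rpow_natCast]

lemma pow2_rpow32 {x : ℝ} (hx : 0 ≤ x) : (x ^ 2) ^ ((3:ℝ)/2) = x ^ 3 := by
  rw [← Real.rpow_natCast x 2, ← Real.rpow_mul hx,
    show ((2:ℕ):ℝ) * ((3:ℝ)/2) = ((3:ℕ):ℝ) by norm_num, Real.rpow_natCast]

lemma pow2_rpow3 {x : ℝ} (hx : 0 ≤ x) : (x ^ 2) ^ (3:ℝ) = x ^ 6 := by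
  rw [← Real.rpow_natCast x 2, ← Real.rpow_mul hx,
    show ((2:ℕ):ℝ) * (3:ℝ) = ((6:ℕ):ℝ) by norm_num, Real.rpow_natCast]

/-- Cauchy–Schwarz (Hölder with `p = q = 2`) for nonnegative, continuous, compactly
supported functions. -/
lemma holder22 {f g : E3 → ℝ} (hf : Continuous f) (hg : Continuous g)
    (h2f : HasCompactSupport f) (h2g : HasCompactSupport g)
    (hf0 : ∀ x, 0 ≤ f x) (hg0 : ∀ x, 0 ≤ g x) :
    ∫ x, f x * g x ≤ Real.sqrt (∫ x, f x ^ 2) * Real.sqrt (∫ x, g x ^ 2) := by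
  have hpq : Real.HolderConjugate 2 2 := Real.holderConjugate_iff.mpr ⟨one_lt_two, by norm_num⟩
  have h := integral_mul_le_Lp_mul_Lq_of_nonneg (μ := (volume : Measure E3)) hpq
    (Filter.Eventually.of_forall hf0) (Filter.Eventually.of_forall hg0)
    (hf.memLp_of_hasCompactSupport h2f) (hg.memLp_of_hasCompactSupport h2g)
  simp_rw [rpow_two_eq] at h
  calc ∫ x, f x * g x ≤ (∫ x, f x ^ 2) ^ ((1:ℝ)/2) * (∫ x, g x ^ 2) ^ ((1:ℝ)/2) := h
    _ = Real.sqrt (∫ x, f x ^ 2) * Real.sqrt (∫ x, g x ^ 2) := by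
        rw [Real.sqrt_eq_rpow, Real.sqrt_eq_rpow]

end BstarAux

open BstarAux

set_option maxHeartbeats 2000000 in
/-- Bound (2.12) of the paper:
`|b*(u,v,w)| ≤ C ‖u‖_{L²} (‖∇v‖_{L³} + ‖v‖_{L^∞}) ‖∇w‖_{L²}` for smooth vector fields
compactly supported in a fixed ball of `ℝ³`. -/
theorem bstar_L2_L3_Linfty_bound (R : ℝ) (hR : 0 < R) :
    ∃ C : ℝ, 0 < C ∧
      ∀ u v w : EuclideanSpace ℝ (Fin 3) → EuclideanSpace ℝ (Fin 3),
        ContDiff ℝ (⊤ : ℕ∞) u → ContDiff ℝ (⊤ : ℕ∞) v → ContDiff ℝ (⊤ : ℕ∞) w →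
        tsupport u ⊆ Metric.closedBall 0 R →
        tsupport v ⊆ Metric.closedBall 0 R →
        tsupport w ⊆ Metric.closedBall 0 R →
        |bstar u v w| ≤
          C * Real.sqrt (∫ x, ‖u x‖ ^ 2) *
            ((∫ x, frobNorm (fderiv ℝ v x) ^ 3) ^ ((1 : ℝ) / 3) + ⨆ x, ‖v x‖) *
            Real.sqrt (∫ x, frobNorm (fderiv ℝ w x) ^ 2) := by
  set Kc : ℝ :=
    ((MeasureTheory.eLpNormLESNormFDerivOfEqInnerConst (E := E3) volume 2 : ℝ≥0) : ℝ) with hKc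
  have hKc0 : 0 ≤ Kc := by rw [hKc]; exact NNReal.coe_nonneg _
  refine ⟨Kc + 1, by linarith, fun u v w hu hv hw hsu hsv hsw => ?_⟩
  -- basic continuity / support facts
  have cu : Continuous u := hu.continuous
  have cv : Continuous v := hv.continuous
  have cw : Continuous w := hw.continuous
  have hcsu : HasCompactSupport u :=
    HasCompactSupport.of_support_subset_isCompact (isCompact_closedBall 0 R)
      ((subset_tsupport _).trans hsu)
  have hcsv : HasCompactSupport v :=
    HasCompactSupport.of_support_subset_isCompact (isCompact_closedBall 0 R)
      ((subset_tsupport _).trans hsv)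
  have hcsw : HasCompactSupport w :=
    HasCompactSupport.of_support_subset_isCompact (isCompact_closedBall 0 R)
      ((subset_tsupport _).trans hsw)
  have cDv : Continuous (fderiv ℝ v) := hv.continuous_fderiv (by simp)
  have cDw : Continuous (fderiv ℝ w) := hw.continuous_fderiv (by simp)
  have hcsDv : HasCompactSupport (fderiv ℝ v) := hcsv.fderiv ℝ
  have hcsDw : HasCompactSupport (fderiv ℝ w) := hcsw.fderiv ℝ
  have cFv : Continuous fun x => frobNorm (fderiv ℝ v x) := frobNorm_continuous cDv
  have cFw : Continuous fun x => frobNorm (fderiv ℝ w x) := frobNorm_continuous cDw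
  have hFv0 : ∀ x, 0 ≤ frobNorm (fderiv ℝ v x) := fun x => frobNorm_nonneg _
  have hFw0 : ∀ x, 0 ≤ frobNorm (fderiv ℝ w x) := fun x => frobNorm_nonneg _
  -- names for the four quantities in the bound
  set a : ℝ := Real.sqrt (∫ x, ‖u x‖ ^ 2) with ha_def
  set b : ℝ := (∫ x, frobNorm (fderiv ℝ v x) ^ 3) ^ ((1 : ℝ) / 3) with hb_def
  set s : ℝ := ⨆ x, ‖v x‖ with hs_def
  set d : ℝ := Real.sqrt (∫ x, frobNorm (fderiv ℝ w x) ^ 2) with hd_def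
  have ha0 : 0 ≤ a := Real.sqrt_nonneg _
  have hb0 : 0 ≤ b := Real.rpow_nonneg (integral_nonneg fun x => pow_nonneg (frobNorm_nonneg _) _) _
  have hd0 : 0 ≤ d := Real.sqrt_nonneg _
  have hbdd : BddAbove (Set.range fun x => ‖v x‖) :=
    cv.norm.bddAbove_range_of_hasCompactSupport hcsv.norm
  have hsle : ∀ x, ‖v x‖ ≤ s := fun x => le_ciSup hbdd x
  have hs0 : 0 ≤ s := (norm_nonneg (v 0)).trans (hsle 0)
  -- Sobolev inequality: `‖w‖_{L⁶} ≤ Kc * ‖Dw‖_{L²}` (with operator norm on `Dw`)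
  have hw6mem : MemLp w 6 (volume : Measure E3) :=
    cw.memLp_of_hasCompactSupport hcsw
  have hDw2mem : MemLp (fderiv ℝ w) 2 (volume : Measure E3) :=
    cDw.memLp_of_hasCompactSupport hcsDw
  have sobolev : eLpNorm w 6 (volume : Measure E3) ≤
      (MeasureTheory.eLpNormLESNormFDerivOfEqInnerConst (E := E3) volume 2) *
        eLpNorm (fderiv ℝ w) 2 volume := by
    have := MeasureTheory.eLpNorm_le_eLpNorm_fderiv_of_eq_inner (E := E3) (F' := E3)
      (volume) (hw.of_le (by simp)) hcsw (p := 2) (p' := 6) (by norm_num)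
      (by simp) (by simp; norm_num)
    simpa using this
  set W6 : ℝ := (∫ x, ‖w x‖ ^ 6) ^ ((1 : ℝ)/6) with hW6_def
  have hW60 : 0 ≤ W6 := Real.rpow_nonneg (integral_nonneg fun x => by positivity) _
  set d' : ℝ := Real.sqrt (∫ x, ‖fderiv ℝ w x‖ ^ 2) with hd'_def
  have hd'0 : 0 ≤ d' := Real.sqrt_nonneg _
  have heq6 : eLpNorm w 6 (volume : Measure E3) = ENNReal.ofReal W6 := by
    rw [hw6mem.eLpNorm_eq_integral_rpow_norm (by norm_num) (by norm_num)]
    congr 1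
    rw [show ((6:ℝ≥0∞).toReal) = (6:ℝ) by simp]
    simp_rw [rpow_six_eq]
    rw [hW6_def]
    norm_num
  have heq2 : eLpNorm (fderiv ℝ w) 2 (volume : Measure E3) = ENNReal.ofReal d' := by
    rw [hDw2mem.eLpNorm_eq_integral_rpow_norm (by norm_num) (by norm_num)]
    congr 1
    rw [show ((2:ℝ≥0∞).toReal) = (2:ℝ) by simp]
    simp_rw [rpow_two_eq]
    rw [hd'_def, Real.sqrt_eq_rpow]
    norm_num
  have hW6d' : W6 ≤ Kc * d' := by
    have h := sobolev
    rw [heq6, heq2] at h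
    have h2 : (ENNReal.ofReal W6).toReal ≤
        ((MeasureTheory.eLpNormLESNormFDerivOfEqInnerConst (E := E3) volume 2 : ℝ≥0∞) *
          ENNReal.ofReal d').toReal := by
      refine ENNReal.toReal_mono ?_ h
      exact ENNReal.mul_ne_top ENNReal.coe_ne_top ENNReal.ofReal_ne_top
    rw [ENNReal.toReal_ofReal hW60, ENNReal.toReal_mul, ENNReal.toReal_ofReal hd'0] at h2
    exact h2
  have hd'd : d' ≤ d := by
    refine Real.sqrt_le_sqrt ?_
    refine integral_mono ?_ ?_ ?_
    · exact (cDw.norm.pow 2).integrable_of_hasCompactSupport (hcs_sq hcsDw.norm)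
    · exact (cFw.pow 2).integrable_of_hasCompactSupport
        (hcs_sq (hcsDw.comp_left (g := frobNorm) (by simp [frobNorm])))
    · intro x
      exact pow_le_pow_left₀ (norm_nonneg _) (opNorm_le_frobNorm _) 2
  have hW6 : W6 ≤ Kc * d := hW6d'.trans (by nlinarith)
  -- first term
  have habs1 : |∫ x, (inner ℝ (fderiv ℝ v x (u x)) (w x) : ℝ)| ≤
      ∫ x, |(inner ℝ (fderiv ℝ v x (u x)) (w x) : ℝ)| := by
    simpa [Real.norm_eq_abs] using
      norm_integral_le_integral_norm (fun x => (inner ℝ (fderiv ℝ v x (u x)) (w x) : ℝ))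
  have cg1 : Continuous fun x => (inner ℝ (fderiv ℝ v x (u x)) (w x) : ℝ) :=
    (cDv.clm_apply cu).inner cw
  have hcsg1 : HasCompactSupport fun x => (inner ℝ (fderiv ℝ v x (u x)) (w x) : ℝ) := by
    refine HasCompactSupport.intro (isCompact_closedBall (0:E3) R) fun x hx => ?_
    have : w x = 0 := image_eq_zero_of_notMem_tsupport fun h => hx (hsw h)
    simp [this]
  have hmono1 : (∫ x, |(inner ℝ (fderiv ℝ v x (u x)) (w x) : ℝ)|) ≤
      ∫ x, ‖u x‖ * (frobNorm (fderiv ℝ v x) * ‖w x‖) := by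
    refine integral_mono (cg1.abs.integrable_of_hasCompactSupport hcsg1.abs) ?_ ?_
    · exact (cu.norm.mul (cFv.mul cw.norm)).integrable_of_hasCompactSupport
        (by
          refine HasCompactSupport.intro (isCompact_closedBall (0:E3) R) fun x hx => ?_
          have : u x = 0 := image_eq_zero_of_notMem_tsupport fun h => hx (hsu h)
          simp [this])
    · intro x
      have h1 : |(inner ℝ (fderiv ℝ v x (u x)) (w x) : ℝ)| ≤ ‖fderiv ℝ v x (u x)‖ * ‖w x‖ :=
        abs_real_inner_le_norm _ _
      have h2 : ‖fderiv ℝ v x (u x)‖ ≤ frobNorm (fderiv ℝ v x) * ‖u x‖ :=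
        ((fderiv ℝ v x).le_opNorm (u x)).trans
          (mul_le_mul_of_nonneg_right (opNorm_le_frobNorm _) (norm_nonneg _))
      calc |(inner ℝ (fderiv ℝ v x (u x)) (w x) : ℝ)| ≤ ‖fderiv ℝ v x (u x)‖ * ‖w x‖ := h1
        _ ≤ (frobNorm (fderiv ℝ v x) * ‖u x‖) * ‖w x‖ :=
            mul_le_mul_of_nonneg_right h2 (norm_nonneg _)
        _ = ‖u x‖ * (frobNorm (fderiv ℝ v x) * ‖w x‖) := by ring
  have hcs_fvw : HasCompactSupport fun x => frobNorm (fderiv ℝ v x) * ‖w x‖ := by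
    refine HasCompactSupport.intro (isCompact_closedBall (0:E3) R) fun x hx => ?_
    have : w x = 0 := image_eq_zero_of_notMem_tsupport fun h => hx (hsw h)
    simp [this]
  have hholder1 : (∫ x, ‖u x‖ * (frobNorm (fderiv ℝ v x) * ‖w x‖)) ≤
      a * Real.sqrt (∫ x, (frobNorm (fderiv ℝ v x) * ‖w x‖) ^ 2) := by
    exact holder22 cu.norm (cFv.mul cw.norm) hcsu.norm hcs_fvw
      (fun x => norm_nonneg _) (fun x => mul_nonneg (hFv0 x) (norm_nonneg _))
  -- Hölder with exponents 3/2 and 3 on `frob² · ‖w‖²`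
  have hholder2 : (∫ x, frobNorm (fderiv ℝ v x) ^ 2 * ‖w x‖ ^ 2) ≤
      (∫ x, frobNorm (fderiv ℝ v x) ^ 3) ^ ((2:ℝ)/3) * (∫ x, ‖w x‖ ^ 6) ^ ((1:ℝ)/3) := by
    have hpq : Real.HolderConjugate ((3:ℝ)/2) 3 := Real.holderConjugate_iff.mpr ⟨by norm_num, by norm_num⟩
    have h := integral_mul_le_Lp_mul_Lq_of_nonneg (μ := (volume : Measure E3)) hpq
      (f := fun x => frobNorm (fderiv ℝ v x) ^ 2) (g := fun x => ‖w x‖ ^ 2)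
      (Filter.Eventually.of_forall fun x => by positivity)
      (Filter.Eventually.of_forall fun x => by positivity)
      ((cFv.pow 2).memLp_of_hasCompactSupport
        (hcs_sq (hcsDv.comp_left (g := frobNorm) (by simp [frobNorm]))))
      ((cw.norm.pow 2).memLp_of_hasCompactSupport (hcs_sq hcsw.norm))
    simp_rw [pow2_rpow32 (hFv0 _), pow2_rpow3 (norm_nonneg _)] at h
    rw [show (1:ℝ)/((3:ℝ)/2) = (2:ℝ)/3 by norm_num, show (1:ℝ)/(3:ℝ) = (1:ℝ)/3 by norm_num] at h
    exact h
  have hsq : Real.sqrt (∫ x, (frobNorm (fderiv ℝ v x) * ‖w x‖) ^ 2) ≤ b * W6 := by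
    have e1 : (∫ x, frobNorm (fderiv ℝ v x) ^ 3) ^ ((2:ℝ)/3) = b ^ 2 := by
      rw [hb_def, ← Real.rpow_natCast ((∫ x, frobNorm (fderiv ℝ v x) ^ 3) ^ ((1:ℝ)/3)) 2,
        ← Real.rpow_mul (integral_nonneg fun x => pow_nonneg (frobNorm_nonneg _) _)]
      norm_num
    have e2 : (∫ x, ‖w x‖ ^ 6) ^ ((1:ℝ)/3) = W6 ^ 2 := by
      rw [hW6_def, ← Real.rpow_natCast ((∫ x, ‖w x‖ ^ 6) ^ ((1:ℝ)/6)) 2,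
        ← Real.rpow_mul (integral_nonneg fun x => by positivity)]
      norm_num
    have h3 : (∫ x, (frobNorm (fderiv ℝ v x) * ‖w x‖) ^ 2) ≤ (b * W6) ^ 2 := by
      have := hholder2
      rw [e1, e2] at this
      calc (∫ x, (frobNorm (fderiv ℝ v x) * ‖w x‖) ^ 2)
          = ∫ x, frobNorm (fderiv ℝ v x) ^ 2 * ‖w x‖ ^ 2 := by simp_rw [mul_pow]
        _ ≤ b ^ 2 * W6 ^ 2 := this
        _ = (b * W6) ^ 2 := by ring
    calc Real.sqrt (∫ x, (frobNorm (fderiv ℝ v x) * ‖w x‖) ^ 2)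
        ≤ Real.sqrt ((b * W6) ^ 2) := Real.sqrt_le_sqrt h3
      _ = b * W6 := Real.sqrt_sq (mul_nonneg hb0 hW60)
  have hT1 : |∫ x, (inner ℝ (fderiv ℝ v x (u x)) (w x) : ℝ)| ≤ a * (b * (Kc * d)) := by
    calc |∫ x, (inner ℝ (fderiv ℝ v x (u x)) (w x) : ℝ)|
        ≤ ∫ x, |(inner ℝ (fderiv ℝ v x (u x)) (w x) : ℝ)| := habs1
      _ ≤ ∫ x, ‖u x‖ * (frobNorm (fderiv ℝ v x) * ‖w x‖) := hmono1
      _ ≤ a * Real.sqrt (∫ x, (frobNorm (fderiv ℝ v x) * ‖w x‖) ^ 2) := hholder1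
      _ ≤ a * (b * W6) := mul_le_mul_of_nonneg_left hsq ha0
      _ ≤ a * (b * (Kc * d)) := by
          refine mul_le_mul_of_nonneg_left (mul_le_mul_of_nonneg_left hW6 hb0) ha0
  -- second term
  have habs2 : |∫ x, (inner ℝ (fderiv ℝ w x (u x)) (v x) : ℝ)| ≤
      ∫ x, |(inner ℝ (fderiv ℝ w x (u x)) (v x) : ℝ)| := by
    simpa [Real.norm_eq_abs] using
      norm_integral_le_integral_norm (fun x => (inner ℝ (fderiv ℝ w x (u x)) (v x) : ℝ))
  have cg2 : Continuous fun x => (inner ℝ (fderiv ℝ w x (u x)) (v x) : ℝ) :=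
    (cDw.clm_apply cu).inner cv
  have hcsg2 : HasCompactSupport fun x => (inner ℝ (fderiv ℝ w x (u x)) (v x) : ℝ) := by
    refine HasCompactSupport.intro (isCompact_closedBall (0:E3) R) fun x hx => ?_
    have : v x = 0 := image_eq_zero_of_notMem_tsupport fun h => hx (hsv h)
    simp [this]
  have hmono2 : (∫ x, |(inner ℝ (fderiv ℝ w x (u x)) (v x) : ℝ)|) ≤
      ∫ x, (frobNorm (fderiv ℝ w x) * ‖u x‖) * s := by
    refine integral_mono (cg2.abs.integrable_of_hasCompactSupport hcsg2.abs) ?_ ?_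
    · refine ((cFw.mul cu.norm).mul continuous_const).integrable_of_hasCompactSupport ?_
      refine HasCompactSupport.intro (isCompact_closedBall (0:E3) R) fun x hx => ?_
      have : u x = 0 := image_eq_zero_of_notMem_tsupport fun h => hx (hsu h)
      simp [this]
    · intro x
      have h1 : |(inner ℝ (fderiv ℝ w x (u x)) (v x) : ℝ)| ≤ ‖fderiv ℝ w x (u x)‖ * ‖v x‖ :=
        abs_real_inner_le_norm _ _
      have h2 : ‖fderiv ℝ w x (u x)‖ ≤ frobNorm (fderiv ℝ w x) * ‖u x‖ :=
        ((fderiv ℝ w x).le_opNorm (u x)).trans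
          (mul_le_mul_of_nonneg_right (opNorm_le_frobNorm _) (norm_nonneg _))
      calc |(inner ℝ (fderiv ℝ w x (u x)) (v x) : ℝ)| ≤ ‖fderiv ℝ w x (u x)‖ * ‖v x‖ := h1
        _ ≤ (frobNorm (fderiv ℝ w x) * ‖u x‖) * s :=
            mul_le_mul h2 (hsle x) (norm_nonneg _)
              (mul_nonneg (hFw0 x) (norm_nonneg _))
  have hcs_fwu : HasCompactSupport fun x => frobNorm (fderiv ℝ w x) * ‖u x‖ := by
    refine HasCompactSupport.intro (isCompact_closedBall (0:E3) R) fun x hx => ?_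
    have : u x = 0 := image_eq_zero_of_notMem_tsupport fun h => hx (hsu h)
    simp [this]
  have hholder3 : (∫ x, frobNorm (fderiv ℝ w x) * ‖u x‖) ≤ d * a := by
    exact holder22 cFw cu.norm
      (hcsDw.comp_left (g := frobNorm) (by simp [frobNorm])) hcsu.norm
      hFw0 (fun x => norm_nonneg _)
  have hT2 : |∫ x, (inner ℝ (fderiv ℝ w x (u x)) (v x) : ℝ)| ≤ (d * a) * s := by
    calc |∫ x, (inner ℝ (fderiv ℝ w x (u x)) (v x) : ℝ)|
        ≤ ∫ x, |(inner ℝ (fderiv ℝ w x (u x)) (v x) : ℝ)| := habs2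
      _ ≤ ∫ x, (frobNorm (fderiv ℝ w x) * ‖u x‖) * s := hmono2
      _ = (∫ x, frobNorm (fderiv ℝ w x) * ‖u x‖) * s := by rw [integral_mul_const]
      _ ≤ (d * a) * s := mul_le_mul_of_nonneg_right hholder3 hs0
  -- conclusion
  have hbstar : |bstar u v w| ≤
      (1/2) * |∫ x, (inner ℝ (fderiv ℝ v x (u x)) (w x) : ℝ)| +
      (1/2) * |∫ x, (inner ℝ (fderiv ℝ w x (u x)) (v x) : ℝ)| := by
    rw [bstar]
    calc |(1/2) * (∫ x, (inner ℝ (fderiv ℝ v x (u x)) (w x) : ℝ)) -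
        (1/2) * (∫ x, (inner ℝ (fderiv ℝ w x (u x)) (v x) : ℝ))|
        ≤ |(1/2) * (∫ x, (inner ℝ (fderiv ℝ v x (u x)) (w x) : ℝ))| +
          |(1/2) * (∫ x, (inner ℝ (fderiv ℝ w x (u x)) (v x) : ℝ))| := abs_sub _ _
      _ = (1/2) * |∫ x, (inner ℝ (fderiv ℝ v x (u x)) (w x) : ℝ)| +
          (1/2) * |∫ x, (inner ℝ (fderiv ℝ w x (u x)) (v x) : ℝ)| := by
          rw [abs_mul, abs_mul, abs_of_pos (show (0:ℝ) < 1/2 by norm_num)]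
  calc |bstar u v w|
      ≤ (1/2) * |∫ x, (inner ℝ (fderiv ℝ v x (u x)) (w x) : ℝ)| +
        (1/2) * |∫ x, (inner ℝ (fderiv ℝ w x (u x)) (v x) : ℝ)| := hbstar
    _ ≤ (1/2) * (a * (b * (Kc * d))) + (1/2) * ((d * a) * s) := by
        have := hT1; have := hT2; nlinarith
    _ ≤ (Kc + 1) * a * (b + s) * d := by
        nlinarith [mul_nonneg (mul_nonneg ha0 hb0) hd0,
          mul_nonneg (mul_nonneg ha0 hs0) hd0,
          mul_nonneg (mul_nonneg (mul_nonneg hKc0 ha0) hs0) hd0,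
          mul_nonneg (mul_nonneg (mul_nonneg hKc0 ha0) hb0) hd0]
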